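/- Let H ∈ {0,1}^{m×n} and γ ∈ ℝ^n with γ_i ≠ 0 for all i. Suppose u ∈ {0,1}^n is the unique minimizer of γᵀv over the fundamental polytope P(H), and let ũ be the hard-decision vector of γ. Then the set E = {i : u_i ≠ ũ_i} of positions where u and ũ differ does not contain any nonempty stopping set of H. -/

import Mathlib

/-- Support of row `j` of a binary matrix `H`. -/
def supp {m n : ℕ} (H : Fin m → Fin n → Bool) (j : Fin m) : Finset (Fin n) :=
  Finset.univ.filter (fun i => H j i)

/-- Left-hand side of the parity inequality associated with `(j, V)` at `u`. -/
def LHS {m n : ℕ} (H : Fin m → Fin n → Bool) (j : Fin m) (V : Finset (Fin n))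
    (u : Fin n → ℝ) : ℝ :=
  ∑ i ∈ V, (1 - u i) + ∑ i ∈ supp H j \ V, u i

/-- The fundamental polytope `P(H)`. -/
def fundamentalPolytope {m n : ℕ} (H : Fin m → Fin n → Bool) : Set (Fin n → ℝ) :=
  {u | (∀ i, 0 ≤ u i ∧ u i ≤ 1) ∧
    ∀ j, ∀ V : Finset (Fin n), V ⊆ supp H j → Odd V.card → 1 ≤ LHS H j V u}

/-- The hard-decision vector of an LLR vector `γ` with nonzero entries. -/
noncomputable def hardDecision {n : ℕ} (γ : Fin n → ℝ) : Fin n → ℝ :=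
  fun i => if 0 < γ i then 0 else 1

/-- A set `S` of column indices is a stopping set of `H` if no row of `H` has
exactly one nonzero entry in the columns indexed by `S`. -/
def IsStoppingSet {m n : ℕ} (H : Fin m → Fin n → Bool)
    (S : Finset (Fin n)) : Prop :=
  ∀ j : Fin m, (supp H j ∩ S).card ≠ 1

/-!
Setting the coordinates of `u` on a nonempty stopping set `S ⊆ E` to `1/2` yields a point of
`P(H)` different from `u`: a row meeting `S` meets it in at least two positions, each of which
contributes `1/2` to every parity inequality of that row, and a row missing `S` sees no change.
On `E` the vector `u` disagrees with the sign of `γ`, so moving those coordinates towards `1/2`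
does not increase the cost, contradicting uniqueness of the minimizer.
-/

open Finset

section HalfOn

variable {m n : ℕ}

noncomputable def halfOn (S : Finset (Fin n)) (u : Fin n → ℝ) : Fin n → ℝ :=
  S.piecewise (fun _ => 1 / 2) u

theorem halfOn_of_mem {S : Finset (Fin n)} (u : Fin n → ℝ) {i : Fin n} (hi : i ∈ S) :
    halfOn S u i = 1 / 2 :=
  piecewise_eq_of_mem _ _ _ hi

theorem halfOn_of_notMem {S : Finset (Fin n)} (u : Fin n → ℝ) {i : Fin n} (hi : i ∉ S) :
    halfOn S u i = u i :=
  piecewise_eq_of_notMem _ _ _ hi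

theorem halfOn_mem_Icc (S : Finset (Fin n)) {u : Fin n → ℝ} (hu : ∀ i, 0 ≤ u i ∧ u i ≤ 1)
    (i : Fin n) : 0 ≤ halfOn S u i ∧ halfOn S u i ≤ 1 := by
  by_cases hi : i ∈ S
  · rw [halfOn_of_mem u hi]; norm_num
  · rw [halfOn_of_notMem u hi]; exact hu i

section ParityInequality

variable (H : Fin m → Fin n → Bool) (j : Fin m) {V : Finset (Fin n)}

theorem LHS_eq_sum_ite (hV : V ⊆ supp H j) (u : Fin n → ℝ) :
    LHS H j V u = ∑ i ∈ supp H j, if i ∈ V then 1 - u i else u i := by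
  rw [sum_ite, filter_mem_eq_inter, inter_eq_right.mpr hV, filter_notMem_eq_sdiff, LHS]

theorem LHS_halfOn_of_disjoint (hV : V ⊆ supp H j) {S : Finset (Fin n)}
    (hS : Disjoint (supp H j) S) (u : Fin n → ℝ) :
    LHS H j V (halfOn S u) = LHS H j V u := by
  rw [LHS_eq_sum_ite H j hV, LHS_eq_sum_ite H j hV]
  exact sum_congr rfl fun i hi => by rw [halfOn_of_notMem u (disjoint_left.mp hS hi)]

theorem card_inter_div_two_le_LHS_halfOn (hV : V ⊆ supp H j) (S : Finset (Fin n))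
    {u : Fin n → ℝ} (hu : ∀ i, 0 ≤ u i ∧ u i ≤ 1) :
    ((supp H j ∩ S).card : ℝ) / 2 ≤ LHS H j V (halfOn S u) := by
  have hhalf : ∀ i ∈ supp H j ∩ S,
      (if i ∈ V then 1 - halfOn S u i else halfOn S u i) = 1 / 2 := fun i hi => by
    rw [halfOn_of_mem u (mem_inter.mp hi).2]
    split_ifs <;> norm_num
  rw [LHS_eq_sum_ite H j hV]
  calc ((supp H j ∩ S).card : ℝ) / 2
      = ∑ i ∈ supp H j ∩ S, if i ∈ V then 1 - halfOn S u i else halfOn S u i := by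
        rw [sum_congr rfl hhalf, sum_const, nsmul_eq_mul]; ring
    _ ≤ ∑ i ∈ supp H j, if i ∈ V then 1 - halfOn S u i else halfOn S u i :=
        sum_le_sum_of_subset_of_nonneg inter_subset_left fun i _ _ => by
          split_ifs <;> linarith [halfOn_mem_Icc S hu i]

end ParityInequality

theorem halfOn_mem_fundamentalPolytope {H : Fin m → Fin n → Bool} {u : Fin n → ℝ}
    (hu : u ∈ fundamentalPolytope H) {S : Finset (Fin n)} (hS : IsStoppingSet H S) :
    halfOn S u ∈ fundamentalPolytope H := by
  refine ⟨halfOn_mem_Icc S hu.1, fun j V hV hodd => ?_⟩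
  rcases Nat.lt_or_ge (supp H j ∩ S).card 2 with hlt | hge
  · have hdisj : Disjoint (supp H j) S := by
      rw [disjoint_iff_inter_eq_empty, ← card_eq_zero]
      have := hS j
      omega
    rw [LHS_halfOn_of_disjoint H j hV hdisj]
    exact hu.2 j V hV hodd
  · calc (1 : ℝ) ≤ ((supp H j ∩ S).card : ℝ) / 2 := by
          rw [le_div_iff₀ two_pos]; exact_mod_cast hge
      _ ≤ LHS H j V (halfOn S u) := card_inter_div_two_le_LHS_halfOn H j hV S hu.1

theorem halfOn_ne_of_binary {u : Fin n → ℝ} (hu : ∀ i, u i = 0 ∨ u i = 1)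
    {S : Finset (Fin n)} (hS : S.Nonempty) : halfOn S u ≠ u := by
  obtain ⟨i, hi⟩ := hS
  intro h
  have := congrFun h i
  rw [halfOn_of_mem u hi] at this
  rcases hu i with h0 | h1 <;> norm_num [*] at this

theorem mul_half_le_mul_of_ne_hardDecision {γ u : Fin n → ℝ} {i : Fin n}
    (hu : u i = 0 ∨ u i = 1) (hne : u i ≠ hardDecision γ i) : γ i * (1 / 2) ≤ γ i * u i := by
  unfold hardDecision at hne
  split_ifs at hne with hγ
  · rw [hu.resolve_left hne]; linarith
  · rw [hu.resolve_right hne]; linarith [not_lt.mp hγ]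

theorem sum_mul_halfOn_le {γ u : Fin n → ℝ} (hu : ∀ i, u i = 0 ∨ u i = 1)
    {S : Finset (Fin n)} (hS : ∀ i ∈ S, u i ≠ hardDecision γ i) :
    ∑ i, γ i * halfOn S u i ≤ ∑ i, γ i * u i := by
  refine sum_le_sum fun i _ => ?_
  by_cases hi : i ∈ S
  · rw [halfOn_of_mem u hi]; exact mul_half_le_mul_of_ne_hardDecision (hu i) (hS i hi)
  · rw [halfOn_of_notMem u hi]

end HalfOn

theorem stmt_15_general (m n : ℕ) (H : Fin m → Fin n → Bool) (γ : Fin n → ℝ)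
    (u : Fin n → ℝ) (hbin : ∀ i, u i = 0 ∨ u i = 1)
    (hfeas : u ∈ fundamentalPolytope H)
    (huniq : ∀ v ∈ fundamentalPolytope H, v ≠ u →
      ∑ i, γ i * u i < ∑ i, γ i * v i)
    (E : Finset (Fin n))
    (hE : E = Finset.univ.filter (fun i => u i ≠ hardDecision γ i)) :
    ∀ S ⊆ E, S.Nonempty → ¬ IsStoppingSet H S := by
  intro S hSE hS hstop
  have hdiffer : ∀ i ∈ S, u i ≠ hardDecision γ i := fun i hi => by
    simpa [hE] using hSE hi
  have hlt := huniq (halfOn S u) (halfOn_mem_fundamentalPolytope hfeas hstop)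
    (halfOn_ne_of_binary hbin hS)
  exact hlt.not_ge (sum_mul_halfOn_le hbin hdiffer)

/-- if a binary vector `u` is the unique minimizer of `γᵀv` over
the fundamental polytope, then the set of positions where `u` differs from
the hard-decision vector of `γ` contains no nonempty stopping set of `H`. -/
theorem stmt_15 (m n : ℕ) (H : Fin m → Fin n → Bool) (γ : Fin n → ℝ)
    (hγ : ∀ i, γ i ≠ 0)
    (u : Fin n → ℝ) (hbin : ∀ i, u i = 0 ∨ u i = 1)
    (hfeas : u ∈ fundamentalPolytope H)
    (huniq : ∀ v ∈ fundamentalPolytope H, v ≠ u →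
      ∑ i, γ i * u i < ∑ i, γ i * v i)
    (E : Finset (Fin n))
    (hE : E = Finset.univ.filter (fun i => u i ≠ hardDecision γ i)) :
    ∀ S ⊆ E, S.Nonempty → ¬ IsStoppingSet H S :=
  stmt_15_general m n H γ u hbin hfeas huniq E hE
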